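/- arXiv:1409.8067 — 5 statements merged into one kernel-verified Lean document; each statement's English description precedes it below -/
import Mathlib

section
/- Let λ > 0 and let η : [0,∞) → ℝ be twice continuously differentiable with η(0) = 0, η'(0) = 1, and (1/2)η''(x) − q(x)η'(x) = −λη(x) for all x ≥ 0. Assume ∫₀^∞ e^{Q(y)} dy = ∞. Then η(x) > 0 for all x > 0 if and only if η is strictly increasing on [0,∞). -/
/-!
For a positive solution `η`, the ODE gives `(e^{-Q} η')' = -2λ e^{-Q} η < 0`, so `e^{-Q} η'` is
strictly decreasing. If `η'` were `≤ 0` somewhere, then `e^{-Q} η' ≤ -c < 0` further on, i.e.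
`η' ≤ -c e^{Q}`, and integrating would give `c ∫_{x₁}^b e^{Q} ≤ η(x₁) - η(b) ≤ η(x₁)` for all
`b`, contradicting `∫₀^∞ e^{Q} = ∞`. Hence `η' > 0` on `(0, ∞)`. The converse is immediate from
`η(0) = 0`.
-/

open MeasureTheory Set Filter Real

theorem hasDerivAt_integral_of_continuousOn_Ici {f : ℝ → ℝ} {a b : ℝ}
    (hf : ContinuousOn f (Ici a)) (hb : a < b) :
    HasDerivAt (fun y => ∫ t in a..y, f t) (f b) b :=
  intervalIntegral.integral_hasDerivAt_right
    ((hf.mono (by simp [uIcc_of_le hb.le, Icc_subset_Ici_self])).intervalIntegrable)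
    ((hf.mono Ioi_subset_Ici_self).stronglyMeasurableAtFilter isOpen_Ioi b hb)
    ((hf b hb.le).continuousAt (Ici_mem_nhds hb))

theorem continuousOn_integral_of_continuousOn_Ici {f : ℝ → ℝ} {a : ℝ}
    (hf : ContinuousOn f (Ici a)) : ContinuousOn (fun y => ∫ t in a..y, f t) (Ici a) := by
  intro x hx
  have hax : a ≤ x + 1 := by linarith [mem_Ici.1 hx]
  have hint : IntegrableOn f (uIcc a (x + 1)) := by
    rw [uIcc_of_le hax]; exact (hf.mono Icc_subset_Ici_self).integrableOn_Icc
  have hcont := intervalIntegral.continuousOn_primitive_interval hint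
  refine (hcont x ?_).mono_of_mem_nhdsWithin ?_
  · rw [uIcc_of_le hax]; exact ⟨hx, by linarith⟩
  · rw [uIcc_of_le hax, ← Ici_inter_Iic]
    exact inter_mem_nhdsWithin _ (Iic_mem_nhds (by linarith))

theorem integrableOn_Ioi_of_hasDerivAt_le_neg {F F' g : ℝ → ℝ} {a : ℝ}
    (hF : ContinuousOn F (Ici a)) (hF' : ∀ x > a, HasDerivAt F (F' x) x)
    (hg : ContinuousOn g (Ici a)) (hg0 : ∀ x ≥ a, 0 ≤ g x)
    (hFg : ∀ x > a, F' x ≤ -g x) (hF0 : ∀ x > a, 0 ≤ F x) :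
    IntegrableOn g (Ioi a) := by
  have hgi : ∀ b, IntegrableOn g (Icc a b) := fun b =>
    (hg.mono Icc_subset_Ici_self).integrableOn_Icc
  refine integrableOn_Ioi_of_intervalIntegral_norm_bounded (F a) a (b := id) (l := atTop)
    (fun b => (hgi b).mono_set Ioc_subset_Icc_self) tendsto_id ?_
  filter_upwards [eventually_gt_atTop a] with b hb
  have hFTC := intervalIntegral.sub_le_integral_of_hasDeriv_right_of_le hb.le
    (hF.mono Icc_subset_Ici_self) (fun x hx => (hF' x hx.1).hasDerivWithinAt)
    (hgi b).neg (fun x hx => hFg x hx.1)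
  have hnorm : ∫ x in a..b, ‖g x‖ = ∫ x in a..b, g x :=
    intervalIntegral.integral_congr fun x hx =>
      Real.norm_of_nonneg (hg0 x (by rw [uIcc_of_le hb.le] at hx; exact hx.1))
  simp only [Pi.neg_apply, intervalIntegral.integral_neg] at hFTC
  simp only [id, hnorm]
  linarith [hF0 b hb]

section SturmLiouville

variable {q Q η η' η'' : ℝ → ℝ} {lam a : ℝ}

theorem hasDerivAt_exp_neg_mul_deriv {x : ℝ} (hQ : HasDerivAt Q (2 * q x) x)
    (hη' : HasDerivAt η' (η'' x) x) (hode : (1/2) * η'' x - q x * η' x = -lam * η x) :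
    HasDerivAt (fun y => exp (-Q y) * η' y) (-(2 * lam) * (exp (-Q x) * η x)) x :=
  (hQ.neg.exp.mul hη').congr_deriv (by linear_combination 2 * exp (-Q x) * hode)

theorem strictAntiOn_exp_neg_mul_deriv (hlam : 0 < lam)
    (hQ : ∀ x > a, HasDerivAt Q (2 * q x) x) (hη' : ∀ x > a, HasDerivAt η' (η'' x) x)
    (hode : ∀ x > a, (1/2) * η'' x - q x * η' x = -lam * η x) (hpos : ∀ x > a, 0 < η x) :
    StrictAntiOn (fun y => exp (-Q y) * η' y) (Ioi a) := by
  have hderiv x (hx : a < x) := hasDerivAt_exp_neg_mul_deriv (hQ x hx) (hη' x hx) (hode x hx)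
  refine strictAntiOn_of_deriv_neg (convex_Ioi a)
    (fun x hx => (hderiv x hx).continuousAt.continuousWithinAt) fun x hx => ?_
  rw [interior_Ioi] at hx
  rw [(hderiv x hx).deriv]
  have := mul_pos (exp_pos (-Q x)) (hpos x hx)
  nlinarith

theorem deriv_pos_of_pos_of_lintegral_exp_eq_top (hlam : 0 < lam)
    (hQc : ContinuousOn Q (Ici a)) (hQ : ∀ x > a, HasDerivAt Q (2 * q x) x)
    (hη : ∀ x > a, HasDerivAt η (η' x) x)
    (hη' : ∀ x > a, HasDerivAt η' (η'' x) x)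
    (hode : ∀ x > a, (1/2) * η'' x - q x * η' x = -lam * η x)
    (hΛ : ∫⁻ y in Ioi a, ENNReal.ofReal (exp (Q y)) = ⊤) (hpos : ∀ x > a, 0 < η x) :
    ∀ x > a, 0 < η' x := by
  intro x₀ hx₀
  by_contra! hx₀'
  set w := fun y => exp (-Q y) * η' y
  have hanti := strictAntiOn_exp_neg_mul_deriv hlam hQ hη' hode hpos
  set x₁ := x₀ + 1
  have hx₁ : a < x₁ := by linarith
  have hw : w x₁ < 0 := (hanti (mem_Ioi.2 hx₀) (mem_Ioi.2 hx₁) (by linarith)).trans_le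
    (mul_nonpos_of_nonneg_of_nonpos (exp_pos _).le hx₀')
  have hbound : ∀ x > x₁, η' x ≤ -(-w x₁ * exp (Q x)) := by
    intro x hx
    have hwx : exp (-Q x) * η' x ≤ w x₁ :=
      (hanti (mem_Ioi.2 hx₁) (mem_Ioi.2 (hx₁.trans hx)) hx).le
    calc η' x = exp (Q x) * (exp (-Q x) * η' x) := by rw [← mul_assoc, ← exp_add]; simp
      _ ≤ exp (Q x) * w x₁ := by gcongr
      _ = -(-w x₁ * exp (Q x)) := by ring
  have hQc₁ : ContinuousOn Q (Ici x₁) := hQc.mono (Ici_subset_Ici.2 hx₁.le)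
  have htail : IntegrableOn (fun y => exp (Q y)) (Ioi x₁) := by
    have := integrableOn_Ioi_of_hasDerivAt_le_neg
      (fun x hx => (hη x (hx₁.trans_le hx)).continuousAt.continuousWithinAt)
      (fun x hx => hη x (hx₁.trans hx)) (continuousOn_const.mul hQc₁.rexp)
      (fun x _ => mul_nonneg (by linarith) (exp_pos _).le) hbound
      (fun x hx => (hpos x (hx₁.trans hx)).le)
    exact (integrable_const_mul_iff (isUnit_iff_ne_zero.2 (by linarith : -w x₁ ≠ 0)) _).1 this
  have hhead : IntegrableOn (fun y => exp (Q y)) (Ioc a x₁) :=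
    ((hQc.mono Icc_subset_Ici_self).rexp.integrableOn_Icc).mono_set Ioc_subset_Icc_self
  have hall : IntegrableOn (fun y => exp (Q y)) (Ioi a) := by
    rw [← Ioc_union_Ioi_eq_Ioi hx₁.le]; exact hhead.union htail
  exact hall.lintegral_lt_top.ne hΛ

end SturmLiouville

theorem stmt_3_general (q Q : ℝ → ℝ) (hq : ContDiffOn ℝ 1 q (Ici 0))
    (hQ : ∀ y, Q y = ∫ t in (0:ℝ)..y, 2 * q t)
    (lam : ℝ) (hlam : 0 < lam) (η η' η'' : ℝ → ℝ)
    (hη' : ∀ x ∈ Ici (0:ℝ), HasDerivWithinAt η (η' x) (Ici 0) x)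
    (hη'' : ∀ x ∈ Ici (0:ℝ), HasDerivWithinAt η' (η'' x) (Ici 0) x)
    (hη0 : η 0 = 0)
    (hode : ∀ x ≥ (0:ℝ), (1/2) * η'' x - q x * η' x = -lam * η x)
    (hΛ : ∫⁻ y in Ioi (0:ℝ), ENNReal.ofReal (Real.exp (Q y)) = ⊤) :
    (∀ x > (0:ℝ), 0 < η x) ↔ StrictMonoOn η (Ici 0) := by
  have h2q : ContinuousOn (fun t => 2 * q t) (Ici 0) := continuousOn_const.mul hq.continuousOn
  obtain rfl : Q = fun y => ∫ t in (0:ℝ)..y, 2 * q t := funext hQ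
  have hηd x (hx : 0 < x) := (hη' x hx.le).hasDerivAt (Ici_mem_nhds hx)
  have hη'd x (hx : 0 < x) := (hη'' x hx.le).hasDerivAt (Ici_mem_nhds hx)
  constructor
  · intro hpos
    have hderiv := deriv_pos_of_pos_of_lintegral_exp_eq_top hlam
      (continuousOn_integral_of_continuousOn_Ici h2q)
      (fun x hx => hasDerivAt_integral_of_continuousOn_Ici h2q hx) hηd hη'd
      (fun x hx => hode x hx.le) hΛ hpos
    refine strictMonoOn_of_deriv_pos (convex_Ici 0) (fun x hx => (hη' x hx).continuousWithinAt)
      fun x hx => ?_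
    rw [interior_Ici] at hx
    rw [(hηd x hx).deriv]
    exact hderiv x hx
  · intro hmono x hx
    simpa [hη0] using hmono self_mem_Ici (mem_Ici.2 hx.le) hx

/-- With `λ > 0`, `η` as in STATEMENT 0, and `∫₀^∞ exp (Q y) dy = ∞`,
`η` is positive on `(0,∞)` iff `η` is strictly increasing on `[0,∞)`. -/
theorem stmt_3 (q Q : ℝ → ℝ) (hq : ContDiffOn ℝ 1 q (Ici 0))
    (hQ : ∀ y, Q y = ∫ t in (0:ℝ)..y, 2 * q t)
    (lam : ℝ) (hlam : 0 < lam) (η η' η'' : ℝ → ℝ)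
    (hη' : ∀ x ∈ Ici (0:ℝ), HasDerivWithinAt η (η' x) (Ici 0) x)
    (hη'' : ∀ x ∈ Ici (0:ℝ), HasDerivWithinAt η' (η'' x) (Ici 0) x)
    (hη''c : ContinuousOn η'' (Ici 0))
    (hη0 : η 0 = 0) (hη'0 : η' 0 = 1)
    (hode : ∀ x ≥ (0:ℝ), (1/2) * η'' x - q x * η' x = -lam * η x)
    (hΛ : ∫⁻ y in Ioi (0:ℝ), ENNReal.ofReal (Real.exp (Q y)) = ⊤) :
    (∀ x > (0:ℝ), 0 < η x) ↔ StrictMonoOn η (Ici 0) :=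
  stmt_3_general q Q hq hQ lam hlam η η' η'' hη' hη'' hη0 hode hΛ
end

section
/- Let λ > 0 and let η : [0,∞) → ℝ be twice continuously differentiable with η(0) = 0, η'(0) = 1, and (1/2)η''(x) − q(x)η'(x) = −λη(x) for all x ≥ 0. If η is strictly increasing on [0,∞), then the function z ↦ η(z) e^{−Q(z)} is integrable on (0,∞) and ∫₀^∞ η(z) e^{−Q(z)} dz ≤ 1/(2λ). -/
open MeasureTheory Set Filter Topology intervalIntegral

/-!
Multiplying the equation by `2 e^{-Q}` gives `(η' e^{-Q})' = -2λ η e^{-Q}`, so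
`λ ∫₀^b η e^{-Q} = (1 - η'(b) e^{-Q(b)}) / 2 ≤ 1/2`, because an increasing `η` has `η' ≥ 0`.
As `η ≥ 0`, these uniform bounds on the partial integrals give integrability on `(0, ∞)`
and the same bound for the full integral.
-/

lemma hasDerivWithinAt_integral_Ici {E : Type*} [NormedAddCommGroup E] [NormedSpace ℝ E]
    [CompleteSpace E] {g : ℝ → E} {a x : ℝ} (hg : ContinuousOn g (Ici a)) (hx : a ≤ x) :
    HasDerivWithinAt (fun y => ∫ t in a..y, g t) (g x) (Ici a) x := by
  have : Fact (x ∈ Icc a (x + 1)) := ⟨⟨hx, by linarith⟩⟩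
  have hIcc : Icc a (x + 1) ⊆ Ici a := Icc_subset_Ici_self
  have h := integral_hasDerivWithinAt_right (a := a) (b := x) (s := Icc a (x + 1))
    ((hg.mono Icc_subset_Ici_self).intervalIntegrable_of_Icc hx)
    ((hg.mono hIcc).stronglyMeasurableAtFilter_nhdsWithin measurableSet_Icc x)
    ((hg x hx).mono hIcc)
  rwa [← Ici_inter_Iic, hasDerivWithinAt_inter (Iic_mem_nhds (by linarith))] at h

lemma accPt_Ici {a x : ℝ} (hx : a ≤ x) : AccPt x (𝓟 (Ici a)) := by
  rw [accPt_principal_iff_nhdsWithin]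
  refine (nhdsGT_neBot x).mono (nhdsWithin_mono x fun y hy => ?_)
  exact ⟨mem_Ici.2 (hx.trans (le_of_lt hy)), ne_of_gt hy⟩

lemma hasDerivWithinAt_deriv_mul_exp_neg_of_ode {q Q η η' η'' : ℝ → ℝ} {s : Set ℝ}
    {lam x : ℝ} (hQ : HasDerivWithinAt Q (2 * q x) s x) (hη' : HasDerivWithinAt η' (η'' x) s x)
    (hode : (1 / 2) * η'' x - q x * η' x = -lam * η x) (hlam : lam ≠ 0) :
    HasDerivWithinAt (fun y => η' y * Real.exp (-Q y) / (2 * lam))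
      (-(η x * Real.exp (-Q x))) s x := by
  refine ((hη'.mul hQ.neg.exp).div_const (2 * lam)).congr_deriv ?_
  field_simp
  linear_combination (2 * Real.exp (-Q x)) * hode

lemma intervalIntegral_le_of_hasDerivWithinAt_neg {G g : ℝ → ℝ} {a b : ℝ} (hab : a ≤ b)
    (hG : ∀ x ∈ Ici a, HasDerivWithinAt G (-g x) (Ici a) x)
    (hg : IntervalIntegrable g volume a b) (hGb : 0 ≤ G b) :
    ∫ x in a..b, g x ≤ G a := by
  have hcont : ContinuousOn G (Icc a b) := fun x hx =>
    (hG x hx.1).continuousWithinAt.mono Icc_subset_Ici_self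
  have hderiv : ∀ x ∈ Ioo a b, HasDerivWithinAt G (-g x) (Ioi x) x := fun x hx =>
    (hG x hx.1.le).mono (Ioi_subset_Ici hx.1.le)
  have hftc := integral_eq_sub_of_hasDeriv_right_of_le hab hcont hderiv hg.neg
  rw [intervalIntegral.integral_neg] at hftc
  linarith

lemma integrableOn_Ioi_and_integral_le_of_intervalIntegral_le {f : ℝ → ℝ} {a C : ℝ}
    (hf : ∀ b, IntegrableOn f (Ioc a b)) (hf0 : ∀ x ∈ Ioi a, 0 ≤ f x)
    (hC : ∀ b, a ≤ b → ∫ x in a..b, f x ≤ C) :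
    IntegrableOn f (Ioi a) ∧ ∫ x in Ioi a, f x ≤ C := by
  have hint : IntegrableOn f (Ioi a) := by
    refine integrableOn_Ioi_of_intervalIntegral_norm_bounded C a hf tendsto_id ?_
    filter_upwards [eventually_ge_atTop a] with b hb
    calc ∫ x in a..b, ‖f x‖ = ∫ x in a..b, f x := by
          rw [integral_of_le hb, integral_of_le hb]
          exact setIntegral_congr_fun measurableSet_Ioc fun x hx => Real.norm_of_nonneg (hf0 x hx.1)
      _ ≤ C := hC b hb
  refine ⟨hint, le_of_tendsto (intervalIntegral_tendsto_integral_Ioi a hint tendsto_id) ?_⟩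
  filter_upwards [eventually_ge_atTop a] with b hb
  exact hC b hb

theorem stmt_4_general (q Q : ℝ → ℝ) (hq : ContDiffOn ℝ 1 q (Ici 0))
    (hQ : ∀ y, Q y = ∫ t in (0:ℝ)..y, 2 * q t)
    (lam : ℝ) (hlam : 0 < lam) (η η' η'' : ℝ → ℝ)
    (hη' : ∀ x ∈ Ici (0:ℝ), HasDerivWithinAt η (η' x) (Ici 0) x)
    (hη'' : ∀ x ∈ Ici (0:ℝ), HasDerivWithinAt η' (η'' x) (Ici 0) x)
    (hη0 : η 0 = 0) (hη'0 : η' 0 = 1)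
    (hode : ∀ x ≥ (0:ℝ), (1/2) * η'' x - q x * η' x = -lam * η x)
    (hmono : StrictMonoOn η (Ici 0)) :
    IntegrableOn (fun z => η z * Real.exp (-(Q z))) (Ioi 0) ∧
      ∫ z in Ioi (0:ℝ), η z * Real.exp (-(Q z)) ≤ 1 / (2 * lam) := by
  have hQ' : ∀ x ∈ Ici (0:ℝ), HasDerivWithinAt Q (2 * q x) (Ici 0) x := by
    rw [funext hQ]
    exact fun x hx => hasDerivWithinAt_integral_Ici (hq.continuousOn.const_smul (2:ℝ)) hx
  have hG : ∀ x ∈ Ici (0:ℝ), HasDerivWithinAt (fun y => η' y * Real.exp (-Q y) / (2 * lam))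
      (-(η x * Real.exp (-Q x))) (Ici 0) x := fun x hx =>
    hasDerivWithinAt_deriv_mul_exp_neg_of_ode (hQ' x hx) (hη'' x hx) (hode x hx) hlam.ne'
  have hη_nonneg : ∀ x ∈ Ici (0:ℝ), 0 ≤ η x := fun x hx =>
    hη0 ▸ hmono.monotoneOn self_mem_Ici hx hx
  have hη'_nonneg : ∀ x ∈ Ici (0:ℝ), 0 ≤ η' x := fun x hx =>
    (hη' x hx).nonneg_of_monotoneOn (accPt_Ici hx) hmono.monotoneOn
  have hf : ContinuousOn (fun z => η z * Real.exp (-(Q z))) (Ici 0) := fun x hx =>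
    (hη' x hx).continuousWithinAt.mul (hQ' x hx).continuousWithinAt.neg.rexp
  refine integrableOn_Ioi_and_integral_le_of_intervalIntegral_le
    (fun b => (hf.mono Icc_subset_Ici_self).integrableOn_Icc.mono_set Ioc_subset_Icc_self)
    (fun x hx => mul_nonneg (hη_nonneg x (mem_Ici_of_Ioi hx)) (Real.exp_pos _).le)
    (fun b hb => ?_)
  have hG0 : η' 0 * Real.exp (-Q 0) / (2 * lam) = 1 / (2 * lam) := by simp [hη'0, hQ 0]
  refine hG0 ▸ intervalIntegral_le_of_hasDerivWithinAt_neg hb hG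
    ((hf.mono Icc_subset_Ici_self).intervalIntegrable_of_Icc hb) ?_
  exact div_nonneg (mul_nonneg (hη'_nonneg b hb) (Real.exp_pos _).le) (by positivity)

/-- With `λ > 0` and `η` as in STATEMENT 0, if `η` is strictly
increasing on `[0,∞)`, then `z ↦ η z * exp (-(Q z))` is integrable on `(0,∞)`
and `∫₀^∞ η z * exp (-(Q z)) dz ≤ 1/(2λ)`. -/
theorem stmt_4 (q Q : ℝ → ℝ) (hq : ContDiffOn ℝ 1 q (Ici 0))
    (hQ : ∀ y, Q y = ∫ t in (0:ℝ)..y, 2 * q t)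
    (lam : ℝ) (hlam : 0 < lam) (η η' η'' : ℝ → ℝ)
    (hη' : ∀ x ∈ Ici (0:ℝ), HasDerivWithinAt η (η' x) (Ici 0) x)
    (hη'' : ∀ x ∈ Ici (0:ℝ), HasDerivWithinAt η' (η'' x) (Ici 0) x)
    (hη''c : ContinuousOn η'' (Ici 0))
    (hη0 : η 0 = 0) (hη'0 : η' 0 = 1)
    (hode : ∀ x ≥ (0:ℝ), (1/2) * η'' x - q x * η' x = -lam * η x)
    (hmono : StrictMonoOn η (Ici 0)) :
    IntegrableOn (fun z => η z * Real.exp (-(Q z))) (Ioi 0) ∧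
      ∫ z in Ioi (0:ℝ), η z * Real.exp (-(Q z)) ≤ 1 / (2 * lam) :=
  stmt_4_general q Q hq hQ lam hlam η η' η'' hη' hη'' hη0 hη'0 hode hmono
end

section
/- Let λ > 0 and let η : [0,∞) → ℝ be twice continuously differentiable with η(0) = 0, η'(0) = 1, and (1/2)η''(x) − q(x)η'(x) = −λη(x) for all x ≥ 0. Assume η is strictly increasing on [0,∞) and that S = ∫₀^∞ e^{Q(y)} (∫_y^∞ e^{−Q(z)} dz) dy = ∞. Then ∫₀^∞ η(z) e^{−Q(z)} dz = 1/(2λ). -/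
open MeasureTheory Set

open scoped ENNReal

/-!
By the differential equation, `g = η' e^{-Q}` satisfies `g' = -2λ η e^{-Q}` and `g(0) = 1`, so
`2λ ∫₀^b η e^{-Q} = 1 - g(b)`. Since `η` increases, `η, g ≥ 0`; hence the integral converges and
`L := 1 - 2λ ∫₀^∞ η e^{-Q}` is a nonnegative lower bound of `g`. Then `η' ≥ L e^{Q}`, so
`η(z) ≥ L ∫₀^z e^{Q}`, and by Tonelli `∫₀^∞ η e^{-Q} ≥ L ∫₀^∞ e^{-Q(z)} ∫₀^z e^{Q} = L S`.
As `S = ∞` and the left side is finite, `L = 0`.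
-/

section FTC

variable {f f' φ : ℝ → ℝ} {a b : ℝ}

theorem hasDerivWithinAt_integral_Ici_s5 {x : ℝ} (hf : ContinuousOn f (Ici a)) (hx : a ≤ x) :
    HasDerivWithinAt (fun u => ∫ t in a..u, f t) (f x) (Ici a) x := by
  have : Fact (x ∈ Icc a (x + 1)) := ⟨⟨hx, by linarith⟩⟩
  have hI : Icc a (x + 1) ⊆ Ici a := Icc_subset_Ici_self
  refine (intervalIntegral.integral_hasDerivWithinAt_right (s := Icc a (x + 1))
    ((hf.mono ?_).intervalIntegrable)
    ((hf.mono hI).stronglyMeasurableAtFilter_nhdsWithin measurableSet_Icc x)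
    ((hf.mono hI) x this.out)).mono_of_mem_nhdsWithin ?_
  · rw [uIcc_of_le hx]; exact Icc_subset_Ici_self
  · rw [← Ici_inter_Iic]; exact inter_mem_nhdsWithin _ (Iic_mem_nhds (by linarith))

theorem integral_eq_sub_of_hasDerivWithinAt_Ici
    (hf : ∀ x ∈ Ici a, HasDerivWithinAt f (f' x) (Ici a) x) (hf' : ContinuousOn f' (Ici a))
    (hab : a ≤ b) : ∫ x in a..b, f' x = f b - f a :=
  intervalIntegral.integral_eq_sub_of_hasDeriv_right_of_le hab
    (fun x hx => (hf x hx.1).continuousWithinAt.mono Icc_subset_Ici_self)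
    (fun x hx => ((hf x hx.1.le).hasDerivAt (Ici_mem_nhds hx.1)).hasDerivWithinAt)
    ((hf'.mono Icc_subset_Ici_self).intervalIntegrable_of_Icc hab)

theorem integral_le_sub_of_hasDerivWithinAt_Ici
    (hf : ∀ x ∈ Ici a, HasDerivWithinAt f (f' x) (Ici a) x) (hφ : ContinuousOn φ (Ici a))
    (hφf : ∀ x ∈ Ici a, φ x ≤ f' x) (hab : a ≤ b) : ∫ x in a..b, φ x ≤ f b - f a :=
  intervalIntegral.integral_le_sub_of_hasDeriv_right_of_le hab
    (fun x hx => (hf x hx.1).continuousWithinAt.mono Icc_subset_Ici_self)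
    (fun x hx => ((hf x hx.1.le).hasDerivAt (Ici_mem_nhds hx.1)).hasDerivWithinAt)
    ((hφ.mono Icc_subset_Ici_self).integrableOn_Icc) (fun x hx => hφf x hx.1.le)

end FTC

theorem HasDerivWithinAt.nonneg_of_monotoneOn_Ici {f : ℝ → ℝ} {f' a x : ℝ}
    (hf : HasDerivWithinAt f f' (Ici a) x) (hx : a ≤ x) (hmono : MonotoneOn f (Ici a)) :
    0 ≤ f' :=
  hf.derivWithin (uniqueDiffOn_Ici a x hx) ▸ hmono.derivWithin_nonneg

theorem integrableOn_Ioi_of_intervalIntegral_le {f : ℝ → ℝ} {a C : ℝ}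
    (hf : ContinuousOn f (Ici a)) (hf0 : ∀ x ∈ Ici a, 0 ≤ f x)
    (h : ∀ b, a ≤ b → ∫ x in a..b, f x ≤ C) : IntegrableOn f (Ioi a) := by
  refine integrableOn_Ioi_of_intervalIntegral_norm_bounded C a
    (fun b => (hf.mono Icc_subset_Ici_self).integrableOn_Icc.mono_set Ioc_subset_Icc_self)
    Filter.tendsto_id ?_
  filter_upwards [Filter.eventually_ge_atTop a] with b hb
  rw [intervalIntegral.integral_congr fun x hx => Real.norm_of_nonneg
    (hf0 x (by rw [id, uIcc_of_le hb] at hx; exact hx.1))]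
  exact h b hb

theorem intervalIntegral_le_setIntegral_Ioi {f : ℝ → ℝ} {a b : ℝ} (hf : IntegrableOn f (Ioi a))
    (hf0 : ∀ x ∈ Ioi a, 0 ≤ f x) (hab : a ≤ b) : ∫ x in a..b, f x ≤ ∫ x in Ioi a, f x := by
  rw [intervalIntegral.integral_of_le hab]
  exact setIntegral_mono_set hf (ae_restrict_of_forall_mem measurableSet_Ioi hf0)
    Ioc_subset_Ioi_self.eventuallyLE

theorem nonpos_of_mul_le_of_lintegral_ofReal_eq_top {α : Type*} [MeasurableSpace α]
    {μ : Measure α} {f g : α → ℝ} {c : ℝ} (hf : Integrable f μ)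
    (hg : ∫⁻ x, ENNReal.ofReal (g x) ∂μ = ∞) (hle : ∀ᵐ x ∂μ, c * g x ≤ f x) : c ≤ 0 := by
  by_contra! hc
  refine hf.lintegral_lt_top.ne (top_unique ?_)
  calc ∞ = ENNReal.ofReal c * ∫⁻ x, ENNReal.ofReal (g x) ∂μ := by
        rw [hg, ENNReal.mul_top (by simpa using hc)]
    _ = ∫⁻ x, ENNReal.ofReal (c * g x) ∂μ := by
        rw [← lintegral_const_mul' _ _ ENNReal.ofReal_ne_top]
        simp_rw [ENNReal.ofReal_mul hc.le]
    _ ≤ ∫⁻ x, ENNReal.ofReal (f x) ∂μ :=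
        lintegral_mono_ae (hle.mono fun x hx => ENNReal.ofReal_le_ofReal hx)

theorem lintegral_mul_setLIntegral_Ioi_swap (ν : Measure ℝ) [SFinite ν] {φ ψ : ℝ → ℝ≥0∞}
    (hφ : AEMeasurable φ ν) (hψ : AEMeasurable ψ ν) :
    ∫⁻ y, φ y * ∫⁻ z in Ioi y, ψ z ∂ν ∂ν = ∫⁻ z, ψ z * ∫⁻ y in Iio z, φ y ∂ν ∂ν := by
  set K : ℝ × ℝ → ℝ≥0∞ := {p | p.1 < p.2}.indicator fun p => φ p.1 * ψ p.2
  have hK : AEMeasurable K (ν.prod ν) :=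
    (hφ.comp_fst.mul hψ.comp_snd).indicator (measurableSet_lt measurable_fst measurable_snd)
  calc ∫⁻ y, φ y * ∫⁻ z in Ioi y, ψ z ∂ν ∂ν = ∫⁻ y, ∫⁻ z, K (y, z) ∂ν ∂ν := by
        congr 1; ext y
        rw [← lintegral_const_mul'' _ hψ.restrict, ← lintegral_indicator measurableSet_Ioi]
        rfl
    _ = ∫⁻ z, ∫⁻ y, K (y, z) ∂ν ∂ν := lintegral_lintegral_swap hK
    _ = ∫⁻ z, ψ z * ∫⁻ y in Iio z, φ y ∂ν ∂ν := by
        congr 1; ext z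
        rw [mul_comm, ← lintegral_mul_const'' _ hφ.restrict, ← lintegral_indicator measurableSet_Iio]
        rfl

theorem setLIntegral_Ioi_mul_setLIntegral_Ioi_swap (μ : Measure ℝ) [SFinite μ] (a : ℝ)
    {φ ψ : ℝ → ℝ≥0∞} (hφ : AEMeasurable φ (μ.restrict (Ioi a)))
    (hψ : AEMeasurable ψ (μ.restrict (Ioi a))) :
    ∫⁻ y in Ioi a, φ y * ∫⁻ z in Ioi y, ψ z ∂μ ∂μ
      = ∫⁻ z in Ioi a, ψ z * ∫⁻ y in Ioo a z, φ y ∂μ ∂μ := by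
  have h := lintegral_mul_setLIntegral_Ioi_swap (μ.restrict (Ioi a)) hφ hψ
  simp only [Measure.restrict_restrict measurableSet_Ioi,
    Measure.restrict_restrict measurableSet_Iio, Iio_inter_Ioi] at h
  rw [← h]
  refine setLIntegral_congr_fun measurableSet_Ioi fun y hy => ?_
  rw [Ioi_inter_Ioi, max_eq_left hy.le]

theorem setLIntegral_Ioi_mul_integral_eq {f g : ℝ → ℝ} {a : ℝ} (hf : ContinuousOn f (Ici a))
    (hg : ContinuousOn g (Ici a)) (hf0 : 0 ≤ f) (hg0 : 0 ≤ g) :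
    ∫⁻ z in Ioi a, ENNReal.ofReal (g z * ∫ y in a..z, f y)
      = ∫⁻ y in Ioi a, ENNReal.ofReal (f y) * ∫⁻ z in Ioi y, ENNReal.ofReal (g z) := by
  have hmeas {h : ℝ → ℝ} (hh : ContinuousOn h (Ici a)) :
      AEMeasurable (fun x => ENNReal.ofReal (h x)) (volume.restrict (Ioi a)) :=
    ((hh.mono Ioi_subset_Ici_self).aemeasurable measurableSet_Ioi).ennreal_ofReal
  rw [setLIntegral_Ioi_mul_setLIntegral_Ioi_swap volume a (hmeas hf) (hmeas hg)]
  refine setLIntegral_congr_fun measurableSet_Ioi fun z hz => ?_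
  have hfi : IntegrableOn f (Ioo a z) :=
    ((hf.mono Icc_subset_Ici_self).integrableOn_Icc).mono_set Ioo_subset_Icc_self
  rw [ENNReal.ofReal_mul (hg0 z), intervalIntegral.integral_of_le hz.le,
    integral_Ioc_eq_integral_Ioo, ofReal_integral_eq_lintegral_ofReal hfi (ae_of_all _ hf0)]

theorem hasDerivWithinAt_mul_exp_neg_of_ode {q Q η η' η'' : ℝ → ℝ} {lam x : ℝ} {s : Set ℝ}
    (hQ : HasDerivWithinAt Q (2 * q x) s x) (hη' : HasDerivWithinAt η' (η'' x) s x)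
    (hode : (1/2) * η'' x - q x * η' x = -lam * η x) :
    HasDerivWithinAt (fun y => η' y * Real.exp (-Q y)) (-(2 * lam) * (η x * Real.exp (-Q x)))
      s x :=
  (hη'.mul hQ.neg.exp).congr_deriv (by linear_combination 2 * Real.exp (-Q x) * hode)

theorem two_mul_integral_mul_exp_neg_eq_of_ode {q Q η η' η'' : ℝ → ℝ} {lam a b : ℝ}
    (hQ : ∀ x ∈ Ici a, HasDerivWithinAt Q (2 * q x) (Ici a) x) (hQa : Q a = 0)
    (hη : ContinuousOn η (Ici a)) (hη' : ∀ x ∈ Ici a, HasDerivWithinAt η' (η'' x) (Ici a) x)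
    (hη'a : η' a = 1) (hode : ∀ x ≥ a, (1/2) * η'' x - q x * η' x = -lam * η x) (hab : a ≤ b) :
    2 * lam * ∫ x in a..b, η x * Real.exp (-Q x) = 1 - η' b * Real.exp (-Q b) := by
  have hQc : ContinuousOn Q (Ici a) := fun x hx => (hQ x hx).continuousWithinAt
  have := integral_eq_sub_of_hasDerivWithinAt_Ici
    (fun x hx => hasDerivWithinAt_mul_exp_neg_of_ode (hQ x hx) (hη' x hx) (hode x hx))
    (continuousOn_const.mul (hη.mul hQc.neg.rexp)) hab
  rw [intervalIntegral.integral_const_mul, hQa, hη'a, neg_zero, Real.exp_zero, mul_one] at this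
  linarith

theorem stmt_5_general (q Q : ℝ → ℝ) (hq : ContDiffOn ℝ 1 q (Ici 0))
    (hQ : ∀ y, Q y = ∫ t in (0:ℝ)..y, 2 * q t)
    (lam : ℝ) (hlam : 0 < lam) (η η' η'' : ℝ → ℝ)
    (hη' : ∀ x ∈ Ici (0:ℝ), HasDerivWithinAt η (η' x) (Ici 0) x)
    (hη'' : ∀ x ∈ Ici (0:ℝ), HasDerivWithinAt η' (η'' x) (Ici 0) x)
    (hη0 : η 0 = 0) (hη'0 : η' 0 = 1)
    (hode : ∀ x ≥ (0:ℝ), (1/2) * η'' x - q x * η' x = -lam * η x)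
    (hmono : StrictMonoOn η (Ici 0))
    (hS : ∫⁻ y in Ioi (0:ℝ), ENNReal.ofReal (Real.exp (Q y)) *
        ∫⁻ z in Ioi y, ENNReal.ofReal (Real.exp (-(Q z))) = ⊤) :
    ∫ z in Ioi (0:ℝ), η z * Real.exp (-(Q z)) = 1 / (2 * lam) := by
  have hQ' (x : ℝ) (hx : x ∈ Ici (0:ℝ)) : HasDerivWithinAt Q (2 * q x) (Ici 0) x := by
    rw [funext hQ]
    exact hasDerivWithinAt_integral_Ici_s5 (continuousOn_const.mul hq.continuousOn) hx
  have hQc : ContinuousOn Q (Ici 0) := fun x hx => (hQ' x hx).continuousWithinAt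
  have hηc : ContinuousOn η (Ici 0) := fun x hx => (hη' x hx).continuousWithinAt
  set f := fun z => η z * Real.exp (-Q z)
  have hf0 (z : ℝ) (hz : z ∈ Ici (0:ℝ)) : 0 ≤ f z :=
    mul_nonneg (hη0 ▸ hmono.monotoneOn self_mem_Ici hz hz) (Real.exp_pos _).le
  have hpartial (b : ℝ) (hb : 0 ≤ b) := two_mul_integral_mul_exp_neg_eq_of_ode hQ'
    (by rw [hQ 0, intervalIntegral.integral_same]) hηc hη'' hη'0 hode hb
  have hpartial_le (b : ℝ) (hb : 0 ≤ b) : 2 * lam * ∫ z in 0..b, f z ≤ 1 := by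
    rw [hpartial b hb]
    linarith [mul_nonneg ((hη' b hb).nonneg_of_monotoneOn_Ici hb hmono.monotoneOn)
      (Real.exp_pos (-Q b)).le]
  have hfint : IntegrableOn f (Ioi 0) :=
    integrableOn_Ioi_of_intervalIntegral_le (hηc.mul hQc.neg.rexp) hf0 (C := 1 / (2 * lam))
      fun b hb => by rw [le_div_iff₀' (by positivity)]; exact hpartial_le b hb
  set L := 1 - 2 * lam * ∫ z in Ioi 0, f z
  have hL_nonneg : 0 ≤ L := by
    have := (intervalIntegral_tendsto_integral_Ioi 0 hfint Filter.tendsto_id).const_mul (2 * lam)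
    linarith [le_of_tendsto this (Filter.eventually_atTop.2 ⟨0, hpartial_le⟩)]
  have hη'L (x : ℝ) (hx : x ∈ Ici (0:ℝ)) : L * Real.exp (Q x) ≤ η' x := by
    have hLg : L ≤ η' x * Real.exp (-Q x) := by
      nlinarith [hpartial x hx, intervalIntegral_le_setIntegral_Ioi hfint
        (fun z hz => hf0 z (Ioi_subset_Ici_self hz)) hx]
    rwa [Real.exp_neg, le_mul_inv_iff₀ (Real.exp_pos _)] at hLg
  have hL_nonpos : L ≤ 0 := by
    refine nonpos_of_mul_le_of_lintegral_ofReal_eq_top hfint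
      ((setLIntegral_Ioi_mul_integral_eq (g := fun z => Real.exp (-Q z)) hQc.rexp hQc.neg.rexp
        (fun _ => (Real.exp_pos _).le) (fun _ => (Real.exp_pos _).le)).trans hS)
      (ae_restrict_of_forall_mem measurableSet_Ioi fun z hz => ?_)
    have hηL := integral_le_sub_of_hasDerivWithinAt_Ici hη' (hQc.rexp.const_mul L) hη'L hz.le
    rw [intervalIntegral.integral_const_mul, hη0, sub_zero] at hηL
    have := mul_le_mul_of_nonneg_right hηL (Real.exp_pos (-Q z)).le
    simp only [f]
    linarith
  rw [_root_.eq_div_iff (by positivity)]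
  linarith

/-- With `λ > 0` and `η` as in STATEMENT 0, if `η` is strictly
increasing on `[0,∞)` and `S = ∫₀^∞ exp (Q y) (∫_y^∞ exp (-(Q z)) dz) dy = ∞`,
then `∫₀^∞ η z * exp (-(Q z)) dz = 1/(2λ)`. -/
theorem stmt_5 (q Q : ℝ → ℝ) (hq : ContDiffOn ℝ 1 q (Ici 0))
    (hQ : ∀ y, Q y = ∫ t in (0:ℝ)..y, 2 * q t)
    (lam : ℝ) (hlam : 0 < lam) (η η' η'' : ℝ → ℝ)
    (hη' : ∀ x ∈ Ici (0:ℝ), HasDerivWithinAt η (η' x) (Ici 0) x)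
    (hη'' : ∀ x ∈ Ici (0:ℝ), HasDerivWithinAt η' (η'' x) (Ici 0) x)
    (hη''c : ContinuousOn η'' (Ici 0))
    (hη0 : η 0 = 0) (hη'0 : η' 0 = 1)
    (hode : ∀ x ≥ (0:ℝ), (1/2) * η'' x - q x * η' x = -lam * η x)
    (hmono : StrictMonoOn η (Ici 0))
    (hS : ∫⁻ y in Ioi (0:ℝ), ENNReal.ofReal (Real.exp (Q y)) *
        ∫⁻ z in Ioi y, ENNReal.ofReal (Real.exp (-(Q z))) = ⊤) :
    ∫ z in Ioi (0:ℝ), η z * Real.exp (-(Q z)) = 1 / (2 * lam) :=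
  stmt_5_general q Q hq hQ lam hlam η η' η'' hη' hη'' hη0 hη'0 hode hmono hS
end

section
/- Assume ∫₀^∞ e^{−Q(y)} dy < ∞. Then lim_{x→∞} (∫_x^∞ e^{−Q(z)} dz) · (∫₀ˣ e^{Q(y)} dy) = 0 if and only if lim_{n→∞} sup_{r>n} (∫_r^∞ e^{−Q(z)} dz) · (∫_n^r e^{Q(y)} dy) = 0. -/
open MeasureTheory Set Filter

/-- If `∫₀^∞ exp (-(Q y)) dy < ∞`, then
`lim_{x→∞} (∫_x^∞ exp (-(Q z)) dz) * (∫₀ˣ exp (Q y) dy) = 0` iff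
`lim_{n→∞} sup_{r>n} (∫_r^∞ exp (-(Q z)) dz) * (∫_n^r exp (Q y) dy) = 0`
(the latter limit expressed with ε's, the quantities being nonnegative). -/
theorem stmt_8 (q Q : ℝ → ℝ) (hq : ContDiffOn ℝ 1 q (Ici 0))
    (hQ : ∀ y, Q y = ∫ t in (0:ℝ)..y, 2 * q t)
    (hfin : IntegrableOn (fun y => Real.exp (-(Q y))) (Ioi 0)) :
    Tendsto (fun x => (∫ z in Ioi x, Real.exp (-(Q z))) *
        ∫ y in (0:ℝ)..x, Real.exp (Q y)) atTop (nhds 0) ↔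
      ∀ ε > (0:ℝ), ∃ N : ℝ, ∀ n ≥ N, ∀ r > n,
        (∫ z in Ioi r, Real.exp (-(Q z))) * ∫ y in n..r, Real.exp (Q y) ≤ ε := by
  set A : ℝ → ℝ := fun x => ∫ z in Ioi x, Real.exp (-(Q z)) with hAdef
  set B : ℝ → ℝ := fun x => ∫ y in (0:ℝ)..x, Real.exp (Q y) with hBdef
  -- continuity of Q on Icc 0 b
  have hqc : ContinuousOn (fun t => 2 * q t) (Ici 0) :=
    continuousOn_const.mul hq.continuousOn
  have hQc : ∀ b : ℝ, 0 ≤ b → ContinuousOn Q (Icc 0 b) := by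
    intro b hb
    have hint : IntegrableOn (fun t => 2 * q t) (uIcc 0 b) := by
      rw [uIcc_of_le hb]
      exact (hqc.mono Icc_subset_Ici_self).integrableOn_compact isCompact_Icc
    have hcont := intervalIntegral.continuousOn_primitive_interval hint
    rw [uIcc_of_le hb] at hcont
    exact hcont.congr fun y _ => (hQ y)
  have hEQ : ∀ a b : ℝ, 0 ≤ a → 0 ≤ b →
      IntervalIntegrable (fun y => Real.exp (Q y)) volume a b := by
    intro a b ha hb
    have hsub : uIcc a b ⊆ Icc 0 (max a b) := by
      rw [uIcc]
      exact Icc_subset_Icc (le_min ha hb) le_rfl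
    have : ContinuousOn (fun y => Real.exp (Q y)) (uIcc a b) :=
      (Real.continuous_exp.comp_continuousOn
        ((hQc (max a b) (le_max_of_le_left ha)))).mono hsub
    exact this.intervalIntegrable
  have hBadd : ∀ n x : ℝ, 0 ≤ n → n ≤ x →
      B x = B n + ∫ y in n..x, Real.exp (Q y) := by
    intro n x hn hnx
    exact (intervalIntegral.integral_add_adjacent_intervals
      (hEQ 0 n le_rfl hn) (hEQ n x hn (hn.trans hnx))).symm
  have hA0 : ∀ x, 0 ≤ A x := fun x =>
    setIntegral_nonneg measurableSet_Ioi fun y _ => (Real.exp_pos _).le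
  have hB0 : ∀ x, 0 ≤ x → 0 ≤ B x := fun x hx =>
    intervalIntegral.integral_nonneg hx fun y _ => (Real.exp_pos _).le
  -- A tends to 0 at infinity
  have hAtend : Tendsto A atTop (nhds 0) := by
    have h1 : Tendsto (fun x => ∫ t in (0:ℝ)..x, Real.exp (-(Q t))) atTop
        (nhds (∫ z in Ioi 0, Real.exp (-(Q z)))) :=
      intervalIntegral_tendsto_integral_Ioi 0 hfin tendsto_id
    have h2 : Tendsto (fun x => (∫ z in Ioi 0, Real.exp (-(Q z)))
        - ∫ t in (0:ℝ)..x, Real.exp (-(Q t))) atTop (nhds 0) := by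
      simpa using (tendsto_const_nhds (x := ∫ z in Ioi 0, Real.exp (-(Q z)))).sub h1
    apply h2.congr'
    filter_upwards [eventually_ge_atTop (0:ℝ)] with x hx
    have hsplit : (∫ z in Ioi 0, Real.exp (-(Q z)))
        = (∫ z in Ioc 0 x, Real.exp (-(Q z))) + A x := by
      rw [← setIntegral_union (Ioc_disjoint_Ioi le_rfl) measurableSet_Ioi
        (hfin.mono_set Ioc_subset_Ioi_self) (hfin.mono_set (Ioi_subset_Ioi hx)),
        Ioc_union_Ioi_eq_Ioi hx]
    rw [intervalIntegral.integral_of_le hx]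
    rw [hsplit]; ring
  constructor
  · intro h ε hε
    obtain ⟨M, hM⟩ := Metric.tendsto_atTop.mp h ε hε
    refine ⟨max M 0, fun n hn r hr => ?_⟩
    have hn0 : 0 ≤ n := le_trans (le_max_right M 0) hn
    have hr0 : 0 ≤ r := hn0.trans hr.le
    have hBn : 0 ≤ B n := hB0 n hn0
    have h1 : (∫ y in n..r, Real.exp (Q y)) ≤ B r := by
      have := hBadd n r hn0 hr.le
      linarith
    have h2 : A r * ∫ y in n..r, Real.exp (Q y) ≤ A r * B r :=
      mul_le_mul_of_nonneg_left h1 (hA0 r)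
    have h3 := hM r (le_trans (le_trans (le_max_left M 0) hn) hr.le)
    rw [Real.dist_eq, sub_zero] at h3
    calc A r * ∫ y in n..r, Real.exp (Q y) ≤ A r * B r := h2
      _ ≤ |A r * B r| := le_abs_self _
      _ ≤ ε := h3.le
  · intro h
    rw [Metric.tendsto_atTop]
    intro ε hε
    obtain ⟨N, hN⟩ := h (ε/2) (by linarith)
    set n := max N 0 with hn
    have hn0 : 0 ≤ n := le_max_right _ _
    have htend : Tendsto (fun x => A x * B n) atTop (nhds 0) := by
      simpa using hAtend.mul_const (B n)
    obtain ⟨M₁, hM₁⟩ := Metric.tendsto_atTop.mp htend (ε/2) (by linarith)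
    refine ⟨max M₁ (n + 1), fun x hx => ?_⟩
    have hxn : n < x := lt_of_lt_of_le (by linarith [le_max_right M₁ (n+1)]) hx
    have hx0 : 0 ≤ x := hn0.trans hxn.le
    have h1 : A x * ∫ y in n..x, Real.exp (Q y) ≤ ε / 2 :=
      hN n (le_max_left _ _) x hxn
    have h2 := hM₁ x (le_trans (le_max_left _ _) hx)
    rw [Real.dist_eq, sub_zero] at h2
    have h2' : A x * B n < ε / 2 := lt_of_le_of_lt (le_abs_self _) h2
    have hsplit : A x * B x = A x * B n + A x * ∫ y in n..x, Real.exp (Q y) := by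
      rw [hBadd n x hn0 hxn.le]; ring
    rw [Real.dist_eq, sub_zero, abs_of_nonneg (mul_nonneg (hA0 x) (hB0 x hx0))]
    rw [hsplit]
    linarith
end

section
/- For every a > 0, the iterated integral ∫₀^∞ e^{a y²} (∫_y^∞ e^{−a z²} dz) dy equals +∞. -/
open MeasureTheory Set

lemma inv_lintegral_top : ∫⁻ x in Ioi (1:ℝ), ENNReal.ofReal x⁻¹ = ⊤ := by
  by_contra h
  apply not_IntegrableOn_Ioi_inv (a := (1:ℝ))
  constructor
  · exact measurable_inv.aestronglyMeasurable
  · rw [hasFiniteIntegral_iff_ofReal]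
    · exact lt_top_iff_ne_top.2 h
    · filter_upwards [ae_restrict_mem measurableSet_Ioi] with x hx
      exact inv_nonneg.2 (le_of_lt (lt_trans one_pos hx))

/-- For every `a > 0`, the iterated extended integral
`∫₀^∞ exp (a y²) (∫_y^∞ exp (-(a z²)) dz) dy` is infinite. -/
theorem stmt_19 (a : ℝ) (ha : 0 < a) :
    ∫⁻ y in Ioi (0:ℝ), ENNReal.ofReal (Real.exp (a * y ^ 2)) *
      ∫⁻ z in Ioi y, ENNReal.ofReal (Real.exp (-(a * z ^ 2))) = ⊤ := by
  rw [eq_top_iff]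
  calc (⊤ : ENNReal) = ENNReal.ofReal (Real.exp (-(3*a))) * ∫⁻ x in Ioi (1:ℝ), ENNReal.ofReal x⁻¹ := by
        rw [inv_lintegral_top, ENNReal.mul_top]
        simp [Real.exp_pos]
    _ = ∫⁻ y in Ioi (1:ℝ), ENNReal.ofReal (Real.exp (-(3*a))) * ENNReal.ofReal y⁻¹ := by
        rw [lintegral_const_mul']
        exact ENNReal.ofReal_ne_top
    _ ≤ ∫⁻ y in Ioi (1:ℝ), ENNReal.ofReal (Real.exp (a * y ^ 2)) *
          ∫⁻ z in Ioi y, ENNReal.ofReal (Real.exp (-(a * z ^ 2))) := by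
        apply setLIntegral_mono' measurableSet_Ioi
        intro y hy
        have hy1 : (1:ℝ) ≤ y := le_of_lt hy
        have hy0 : (0:ℝ) < y := lt_of_lt_of_le one_pos hy1
        have hinner : ENNReal.ofReal (Real.exp (-(a * (y + y⁻¹) ^ 2))) * ENNReal.ofReal y⁻¹ ≤
            ∫⁻ z in Ioi y, ENNReal.ofReal (Real.exp (-(a * z ^ 2))) := by
          calc ENNReal.ofReal (Real.exp (-(a * (y + y⁻¹) ^ 2))) * ENNReal.ofReal y⁻¹
              = ∫⁻ _ in Ioo y (y + y⁻¹), ENNReal.ofReal (Real.exp (-(a * (y + y⁻¹) ^ 2))) := by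
                rw [setLIntegral_const, Real.volume_Ioo]
                congr 1
                rw [add_sub_cancel_left]
            _ ≤ ∫⁻ z in Ioo y (y + y⁻¹), ENNReal.ofReal (Real.exp (-(a * z ^ 2))) := by
                apply setLIntegral_mono' measurableSet_Ioo
                intro z hz
                apply ENNReal.ofReal_le_ofReal
                apply Real.exp_le_exp.2
                have hz0 : 0 < z := lt_trans hy0 hz.1
                have : z ^ 2 ≤ (y + y⁻¹) ^ 2 := by
                  apply pow_le_pow_left₀ hz0.le hz.2.le
                nlinarith
            _ ≤ ∫⁻ z in Ioi y, ENNReal.ofReal (Real.exp (-(a * z ^ 2))) := by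
                apply lintegral_mono'
                apply Measure.restrict_mono Ioo_subset_Ioi_self le_rfl
                exact le_rfl
        calc ENNReal.ofReal (Real.exp (-(3*a))) * ENNReal.ofReal y⁻¹
            ≤ ENNReal.ofReal (Real.exp (a * y ^ 2) * Real.exp (-(a * (y + y⁻¹) ^ 2))) *
              ENNReal.ofReal y⁻¹ := by
              gcongr
              rw [← Real.exp_add]
              apply Real.exp_le_exp.2
              have h1 : y⁻¹ ≤ 1 := inv_le_one_of_one_le₀ hy1
              have h2 : y * y⁻¹ = 1 := mul_inv_cancel₀ hy0.ne'
              have hsq : y⁻¹ * y⁻¹ ≤ 1 := mul_le_one₀ h1 (inv_nonneg.2 hy0.le) h1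
              nlinarith [mul_nonneg ha.le (sq_nonneg y⁻¹), h2, hsq, mul_le_of_le_one_right ha.le hsq]
          _ = ENNReal.ofReal (Real.exp (a * y ^ 2)) *
              (ENNReal.ofReal (Real.exp (-(a * (y + y⁻¹) ^ 2))) * ENNReal.ofReal y⁻¹) := by
              rw [ENNReal.ofReal_mul (Real.exp_nonneg _), mul_assoc]
          _ ≤ _ := by gcongr
    _ ≤ _ := by
        apply lintegral_mono'
        apply Measure.restrict_mono (Ioi_subset_Ioi zero_le_one) le_rfl
        exact le_rfl
end
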